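/- Let x̄ be a feasible point for problem (VP), d, z ∈ ℝ^s, and suppose: (i) z ∈ A(x̄,d); (ii) each g_i with i ∈ I(x̄) is Fréchet differentiable at x̄ and ∇g_i(x̄)d < 0 for every i ∈ I(x̄) \ K(x̄,d); (iii) each g_i with i ∉ I(x̄) is continuous at x̄. Then there exists δ > 0 such that x̄ + td + 0.5t²z ∈ S for all t ∈ (0,δ). -/

import Mathlib

/-!
Each constraint is checked separately along the arc `t ↦ x̄ + t d + t²/2 z`, which leaves `x̄`
with velocity `d`. An inactive constraint stays negative by continuity. An active constraint with
`∇g_i(x̄)d < 0` has `t ↦ g_i(x̄ + t d + t²/2 z)` vanishing at `0` with negative derivative, hence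
negative for small `t > 0`. An active constraint with `∇g_i(x̄)d = 0` is handled by `z ∈ A(x̄,d)`.
As there are finitely many constraints and `X` is open, all hold together for small `t > 0`.
-/

open Set Filter Topology

noncomputable section

/-- The set `A(x,d)` for the constraints `g`. -/
def setA {s : ℕ} (m : ℕ) (g : Fin m → (Fin s → ℝ) → ℝ) (x d : Fin s → ℝ) :
    Set (Fin s → ℝ) :=
  {z | ∀ i, g i x = 0 → fderiv ℝ (g i) x d = 0 →
    ∃ δ > 0, ∀ t ∈ Ioo (0 : ℝ) δ, g i (x + t • d + (t ^ 2 / 2) • z) ≤ 0}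

theorem HasDerivAt.eventually_nhdsGT_lt_of_neg {φ : ℝ → ℝ} {φ' a : ℝ} (hφ : HasDerivAt φ φ' a)
    (hneg : φ' < 0) : ∀ᶠ t in 𝓝[>] a, φ t < φ a := by
  have hslope : ∀ᶠ t in 𝓝[≠] a, slope φ a t < 0 :=
    (hasDerivAt_iff_tendsto_slope.mp hφ).eventually_lt_const hneg
  filter_upwards [nhdsGT_le_nhdsNE a hslope, self_mem_nhdsWithin] with t ht hat
  exact (slope_neg_iff_of_le (le_of_lt hat)).mp ht

section ParabolicArc

variable {E : Type*} [NormedAddCommGroup E] [NormedSpace ℝ E] (x d z : E)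

def parabolicArc (t : ℝ) : E := x + t • d + (t ^ 2 / 2) • z

@[simp]
theorem parabolicArc_zero : parabolicArc x d z 0 = x := by
  simp [parabolicArc]

theorem continuous_parabolicArc : Continuous (parabolicArc x d z) := by
  unfold parabolicArc
  fun_prop

theorem tendsto_parabolicArc_zero : Tendsto (parabolicArc x d z) (𝓝 0) (𝓝 x) := by
  simpa using (continuous_parabolicArc x d z).tendsto 0

theorem hasDerivAt_parabolicArc_zero : HasDerivAt (parabolicArc x d z) d 0 := by
  convert (((hasDerivAt_id (0 : ℝ)).smul_const d).const_add x).add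
    ((((hasDerivAt_id (0 : ℝ)).pow 2).div_const 2).smul_const z) using 1
  · rfl
  · simp

variable {x d}

theorem HasFDerivAt.eventually_lt_comp_parabolicArc {h : E → ℝ} {h' : E →L[ℝ] ℝ}
    (hh : HasFDerivAt h h' x) (hd : h' d < 0) :
    ∀ᶠ t in 𝓝[>] (0 : ℝ), h (parabolicArc x d z t) < h x := by
  have hcomp : HasDerivAt (h ∘ parabolicArc x d z) (h' d) 0 :=
    (parabolicArc_zero x d z ▸ hh).comp_hasDerivAt 0 (hasDerivAt_parabolicArc_zero x d z)
  simpa using hcomp.eventually_nhdsGT_lt_of_neg hd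

end ParabolicArc

/-- if `x̄` is feasible, `z ∈ A(x̄,d)`, the active constraints are Fréchet
differentiable at `x̄` with `∇g_i(x̄)d < 0` for every `i ∈ I(x̄) \ K(x̄,d)`, and the nonactive
constraints are continuous at `x̄`, then `x̄ + td + 0.5 t² z` is feasible for all small `t > 0`. -/
theorem statement6 {s m : ℕ} (X : Set (Fin s → ℝ)) (hX : IsOpen X)
    (g : Fin m → (Fin s → ℝ) → ℝ) (xbar d z : Fin s → ℝ)
    (hxX : xbar ∈ X) (hfeas : ∀ i, g i xbar ≤ 0)
    (hA : z ∈ setA m g xbar d)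
    (hdiff : ∀ i, g i xbar = 0 → DifferentiableAt ℝ (g i) xbar)
    (hneg : ∀ i, g i xbar = 0 → fderiv ℝ (g i) xbar d ≠ 0 → fderiv ℝ (g i) xbar d < 0)
    (hCont : ∀ i, g i xbar ≠ 0 → ContinuousAt (g i) xbar) :
    ∃ δ > 0, ∀ t ∈ Ioo (0 : ℝ) δ,
      xbar + t • d + (t ^ 2 / 2) • z ∈ X ∧
      ∀ i, g i (xbar + t • d + (t ^ 2 / 2) • z) ≤ 0 := by
  have harc := tendsto_parabolicArc_zero xbar d z
  have hconstraint (i : Fin m) : ∀ᶠ t in 𝓝[>] (0 : ℝ), g i (parabolicArc xbar d z t) ≤ 0 := by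
    rcases (hfeas i).lt_or_eq with hinactive | hactive
    · exact (((hCont i hinactive.ne).tendsto.comp harc).eventually_lt_const hinactive).mono
        (fun _ => le_of_lt) |>.filter_mono nhdsWithin_le_nhds
    · by_cases hK : fderiv ℝ (g i) xbar d = 0
      · obtain ⟨δ, hδ, hδA⟩ := hA i hactive hK
        exact mem_of_superset ((nhdsGT_basis 0).mem_of_mem hδ) hδA
      · filter_upwards [(hdiff i hactive).hasFDerivAt.eventually_lt_comp_parabolicArc z
          (hneg i hactive hK)] with t ht
        exact (ht.trans_eq hactive).le
  have hfeasible : ∀ᶠ t in 𝓝[>] (0 : ℝ),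
      parabolicArc xbar d z t ∈ X ∧ ∀ i, g i (parabolicArc xbar d z t) ≤ 0 :=
    ((harc.eventually (hX.mem_nhds hxX)).filter_mono nhdsWithin_le_nhds).and
      (eventually_all.mpr hconstraint)
  exact (nhdsGT_basis 0).eventually_iff.mp hfeasible
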